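/- Let J be a closed ideal in C(Δ, L₁), where Δ is the Cantor set. For each ω ∈ Δ the set J_ω = {g ∈ L₁ : for all ε > 0 there exists f ∈ J with ‖g − f(ω)‖₁ < ε} is a closed ideal of L₁, and J = {f ∈ C(Δ, L₁) : f(ω) ∈ J_ω for all ω ∈ Δ}. -/

import Mathlib

/-!
Evaluation at `ω` maps `J` onto an ideal of `L₁`: if `|h| ≤ |f ω|` with `f ∈ J`, the truncation
`t ↦ h ⊓ |f t| ⊔ -|f t|` lies in `J` and takes the value `h` at `ω`. The fiber `J_ω` is the closure
of this image, and the closure of an ideal is an ideal because the lattice operations are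
continuous. Conversely, if `f ω ∈ J_ω` for all `ω`, then near each point `f` is uniformly
approximated by an element of `J` on a clopen neighbourhood. As `Δ` is compact and totally
disconnected, finitely many of these approximants can be glued along clopen sets; the result stays
in `J` because its modulus is dominated by the sum of their moduli. Since `J` is closed, `f ∈ J`.
-/

open MeasureTheory

namespace IdealsCDL1

/-- The Cantor set. -/
abbrev Δ : Type := ℕ → Bool

/-- `L₁ = L₁[0,1]`. -/
noncomputable abbrev L1 : Type := Lp ℝ 1 (volume.restrict (Set.Icc (0:ℝ) 1))

/-- A subset of a Banach lattice is a (not necessarily closed) ideal if it is a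
linear subspace which is solid: `|h| ≤ |g|` and `g ∈ J` imply `h ∈ J`. -/
def IsIdeal {E : Type} [NormedAddCommGroup E] [Lattice E] [NormedSpace ℝ E]
    (J : Set E) : Prop :=
  (0 ∈ J) ∧ (∀ f ∈ J, ∀ g ∈ J, f + g ∈ J) ∧ (∀ (c : ℝ), ∀ f ∈ J, c • f ∈ J) ∧
    (∀ g ∈ J, ∀ h, |h| ≤ |g| → h ∈ J)

/-- The fiberwise approximation ideal `J_ω ⊆ L₁` of an ideal
`J ⊆ C(Δ, L₁)`. -/
def fiberIdeal (J : Set C(Δ, L1)) (ω : Δ) : Set L1 :=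
  {g : L1 | ∀ ε > (0:ℝ), ∃ f ∈ J, ‖g - f ω‖ < ε}

section LatticeGroup

variable {α : Type} [Lattice α] [AddCommGroup α]

lemma abs_inf_sup_neg_le [IsOrderedAddMonoid α] (h : α) {u : α} (hu : 0 ≤ u) :
    |h ⊓ u ⊔ -u| ≤ u :=
  abs_le'.mpr ⟨sup_le inf_le_right (neg_le_self hu), neg_le.mp le_sup_right⟩

lemma inf_sup_neg_eq_self [IsOrderedAddMonoid α] {h u : α} (hh : |h| ≤ u) :
    h ⊓ u ⊔ -u = h := by
  obtain ⟨hup, hlow⟩ := abs_le'.mp hh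
  rw [inf_eq_left.mpr hup, sup_eq_left.mpr (neg_le.mp hlow)]

lemma continuous_abs_of_topologicalLattice [TopologicalSpace α] [TopologicalLattice α]
    [ContinuousNeg α] : Continuous fun u : α => |u| :=
  continuous_id.sup continuous_neg

end LatticeGroup

section ClopenPiecewise

variable {X Y : Type} [TopologicalSpace X] [TopologicalSpace Y]

open Classical in
noncomputable def clopenPiecewise {s : Set X} (hs : IsClopen s) (f g : C(X, Y)) : C(X, Y) :=
  ⟨s.piecewise f g, f.continuous.piecewise (by simp [hs.frontier_eq]) g.continuous⟩

lemma clopenPiecewise_apply_of_mem {s : Set X} (hs : IsClopen s) (f g : C(X, Y)) {t : X}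
    (ht : t ∈ s) : clopenPiecewise hs f g t = f t := by
  simp [clopenPiecewise, ht]

lemma clopenPiecewise_apply_of_notMem {s : Set X} (hs : IsClopen s) (f g : C(X, Y)) {t : X}
    (ht : t ∉ s) : clopenPiecewise hs f g t = g t := by
  simp [clopenPiecewise, ht]

end ClopenPiecewise

lemma exists_isClopen_mem_dist_lt {X M : Type} [TopologicalSpace X] [CompactSpace X] [T2Space X]
    [TotallyDisconnectedSpace X] [PseudoMetricSpace M] {I : Set C(X, M)} {f : C(X, M)} {x : X}
    (hx : f x ∈ closure ((fun g : C(X, M) => g x) '' I)) {δ : ℝ} (hδ : 0 < δ) :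
    ∃ C, IsClopen C ∧ x ∈ C ∧ ∃ g ∈ I, ∀ t ∈ C, dist (f t) (g t) < δ := by
  obtain ⟨_, ⟨g, hg, rfl⟩, hxg⟩ := Metric.mem_closure_iff.mp hx δ hδ
  have hopen : IsOpen {t | dist (f t) (g t) < δ} :=
    isOpen_lt (f.continuous.dist g.continuous) continuous_const
  obtain ⟨C, hC, hxC, hCsub⟩ := compact_exists_isClopen_in_isOpen hopen hxg
  exact ⟨C, hC, hxC, g, hg, hCsub⟩

variable {E : Type} [NormedAddCommGroup E] [Lattice E] [HasSolidNorm E] [IsOrderedAddMonoid E]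
  [NormedSpace ℝ E]

lemma IsIdeal.closure {I : Set E} (hI : IsIdeal I) : IsIdeal (closure I) := by
  obtain ⟨hzero, hadd, hsmul, hsolid⟩ := hI
  refine ⟨subset_closure hzero, fun f hf g hg => ?_, fun c f hf => ?_, fun g hg h hh => ?_⟩
  · exact map_mem_closure₂ continuous_add hf hg hadd
  · exact map_mem_closure (continuous_const_smul c) hf (hsmul c)
  · -- The truncation `u ↦ h ⊓ |u| ⊔ -|u|` maps `I` into `I` and `g` to `h`.
    rw [← inf_sup_neg_eq_self hh]
    refine map_mem_closure (f := fun u : E => h ⊓ |u| ⊔ -|u|)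
      ((continuous_const.inf continuous_abs_of_topologicalLattice).sup
        continuous_abs_of_topologicalLattice.neg) hg fun u hu => ?_
    exact hsolid u hu _ (abs_inf_sup_neg_le h (abs_nonneg u))

variable {X : Type} [TopologicalSpace X] [CompactSpace X] {I : Set C(X, E)}

lemma IsIdeal.image_eval (hI : IsIdeal I) (x : X) :
    IsIdeal ((fun f : C(X, E) => f x) '' I) := by
  obtain ⟨hzero, hadd, hsmul, hsolid⟩ := hI
  refine ⟨⟨0, hzero, rfl⟩, ?_, ?_, ?_⟩
  · rintro _ ⟨f, hf, rfl⟩ _ ⟨g, hg, rfl⟩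
    exact ⟨f + g, hadd f hf g hg, rfl⟩
  · rintro c _ ⟨f, hf, rfl⟩
    exact ⟨c • f, hsmul c f hf, rfl⟩
  · rintro _ ⟨f, hf, rfl⟩ h hh
    let truncation : C(X, E) := ⟨fun t => h ⊓ |f t| ⊔ -|f t|,
      (continuous_const.inf (continuous_abs_of_topologicalLattice.comp f.continuous)).sup
        (continuous_abs_of_topologicalLattice.comp f.continuous).neg⟩
    refine ⟨truncation, hsolid f hf _ fun t => ?_, inf_sup_neg_eq_self hh⟩
    exact abs_inf_sup_neg_le h (abs_nonneg (f t))

lemma IsIdeal.clopenPiecewise_mem (hI : IsIdeal I) {s : Set X} (hs : IsClopen s)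
    {f g : C(X, E)} (hf : f ∈ I) (hg : g ∈ I) : clopenPiecewise hs f g ∈ I := by
  obtain ⟨-, hadd, -, hsolid⟩ := hI
  have habs_mem : ∀ u ∈ I, |u| ∈ I := fun u hu => hsolid u hu _ (abs_abs u).le
  refine hsolid _ (hadd _ (habs_mem f hf) _ (habs_mem g hg)) _ fun t => ?_
  rw [abs_of_nonneg (add_nonneg (abs_nonneg f) (abs_nonneg g))]
  by_cases ht : t ∈ s
  · simp [clopenPiecewise_apply_of_mem hs f g ht]
  · simp [clopenPiecewise_apply_of_notMem hs f g ht]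

lemma IsIdeal.exists_mem_dist_lt_on_union (hI : IsIdeal I) {f : C(X, E)} {δ : ℝ}
    {C D : Set X} (hC : IsClopen C) (hCf : ∃ g ∈ I, ∀ t ∈ C, dist (f t) (g t) < δ)
    (hDf : ∃ g ∈ I, ∀ t ∈ D, dist (f t) (g t) < δ) :
    ∃ g ∈ I, ∀ t ∈ C ∪ D, dist (f t) (g t) < δ := by
  obtain ⟨g₁, hg₁, hfg₁⟩ := hCf
  obtain ⟨g₂, hg₂, hfg₂⟩ := hDf
  refine ⟨clopenPiecewise hC g₁ g₂, hI.clopenPiecewise_mem hC hg₁ hg₂, fun t ht => ?_⟩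
  by_cases htC : t ∈ C
  · rw [clopenPiecewise_apply_of_mem hC _ _ htC]
    exact hfg₁ t htC
  · rw [clopenPiecewise_apply_of_notMem hC _ _ htC]
    exact hfg₂ t (ht.resolve_left htC)

theorem mem_closure_of_forall_eval_mem_closure [T2Space X] [TotallyDisconnectedSpace X]
    (hI : IsIdeal I) {f : C(X, E)} (hf : ∀ x, f x ∈ closure ((fun g : C(X, E) => g x) '' I)) :
    f ∈ closure I := by
  refine Metric.mem_closure_iff.mpr fun ε hε => ?_
  obtain ⟨C, -, hC, g, hg, hfg⟩ : ∃ C, IsClopen C ∧ Set.univ ⊆ C ∧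
      ∃ g ∈ I, ∀ t ∈ C, dist (f t) (g t) < ε / 2 := by
    refine isCompact_univ.induction_on ⟨∅, isClopen_empty, subset_rfl, 0, hI.1, by simp⟩
      (fun D D' hDD' ⟨C, hC, hD'C, happrox⟩ => ⟨C, hC, hDD'.trans hD'C, happrox⟩)
      (fun D D' ⟨C, hC, hDC, hCf⟩ ⟨C', hC', hD'C', hC'f⟩ =>
        ⟨C ∪ C', hC.union hC', Set.union_subset_union hDC hD'C',
          hI.exists_mem_dist_lt_on_union hC hCf hC'f⟩)
      fun x _ => ?_
    obtain ⟨C, hC, hxC, happrox⟩ := exists_isClopen_mem_dist_lt (hf x) (half_pos hε)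
    exact ⟨C, mem_nhdsWithin_of_mem_nhds (hC.isOpen.mem_nhds hxC), C, hC, subset_rfl, happrox⟩
  refine ⟨g, hg, lt_of_le_of_lt ?_ (half_lt_self hε)⟩
  exact (ContinuousMap.dist_le (half_pos hε).le).mpr fun t => (hfg t (hC trivial)).le

lemma fiberIdeal_eq_closure_image (J : Set C(Δ, L1)) (ω : Δ) :
    fiberIdeal J ω = closure ((fun f : C(Δ, L1) => f ω) '' J) := by
  ext g
  simp only [fiberIdeal, Set.mem_ofPred_eq, Metric.mem_closure_iff, Set.exists_mem_image,
    dist_eq_norm]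

/-- For a closed ideal `J` of the Banach lattice `C(Δ, L₁)` of `L₁`-valued
continuous functions on the Cantor set, each fiber set
`J_ω = {g : ∀ ε > 0, ∃ f ∈ J, ‖g − f(ω)‖ < ε}` is a closed ideal of `L₁`, and
`J = {f : f(ω) ∈ J_ω for all ω}`. -/
theorem ideal_structure (J : Set C(Δ, L1)) (hJclosed : IsClosed J)
    (hJideal : IsIdeal J) :
    (∀ ω : Δ, IsClosed (fiberIdeal J ω) ∧ IsIdeal (fiberIdeal J ω)) ∧
    J = {f : C(Δ, L1) | ∀ ω : Δ, f ω ∈ fiberIdeal J ω} := by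
  simp only [fiberIdeal_eq_closure_image]
  refine ⟨fun ω => ⟨isClosed_closure, (hJideal.image_eval ω).closure⟩, ?_⟩
  ext f
  exact ⟨fun hf ω => subset_closure ⟨f, hf, rfl⟩,
    fun hf => hJclosed.closure_subset (mem_closure_of_forall_eval_mem_closure hJideal hf)⟩

end IdealsCDL1
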